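/- Assume m = 2. For every K > 0 and every δ > 0 there exist a constant B > 0 (depending on p₁, p₂, K and δ) and r₀ > 0 such that for every 0 < r < r₀ there is a measurable set E ⊆ [−1/2, 1/2] of Lebesgue measure at most B·r^{1−δ} with the property that Σ_{h ∈ S(r)} ‖hy‖² ≥ K · log(1/r) for every y ∈ [−1/2, 1/2] \ E. -/

import Mathlib

/-!
Write `P = p 0`, `Q = p 1`, `T = log (1 / r)` and fix `0 < δ' < δ`. The products
`P ^ a * Q ^ b` with `a < (1 - δ') T / log P` and `b < δ' T / log Q` are distinct elements of
`S(r)`. Call `a` far for the row `b` if `nintDist (P ^ a * Q ^ b * y) ≥ 1 / (2P)`. Below that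
threshold multiplication by `P` multiplies `nintDist` by exactly `P`, so a run of `ℓ` indices that
are not far confines `Q ^ b * y` to within `1 / (2 P ^ ℓ)` of an integer. Cutting a row at its
first far index and recursing on the rest shows that the `y ∈ [-1/2, 1/2]` whose row `b` has at
most `n` far indices form a set of measure `O((A + 1) ^ n P ^ (-A)) = O(T ^ n r ^ (1 - δ'))`. The
union `E` of these sets over the `O(T)` rows has measure `O(r ^ (1 - δ))`. For `y ∉ E` every row
has more than `n` far indices, so the sum is at least `(n + 1) (2P)⁻² · δ' T / log Q`, which is
`≥ K T` once `n` is large in terms of `K`, `P`, `Q` and `δ'`.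
-/

open Filter Set MeasureTheory

noncomputable section

/-- The multiplicative monoid generated by the bases `p 0, …, p (m-1)`. -/
def multiS (m : ℕ) (p : Fin m → ℕ) : Set ℕ :=
  {h | ∃ α : Fin m → ℕ, h = ∏ j, p j ^ α j}

/-- `S(r) = {h ∈ S : h·r ≤ 1}`. -/
def multiSr (m : ℕ) (p : Fin m → ℕ) (r : ℝ) : Set ℕ :=
  {h | h ∈ multiS m p ∧ (h : ℝ) * r ≤ 1}

/-- The distance from a real number to the nearest integer. -/
def nintDist (x : ℝ) : ℝ := |x - round x|

open Real Asymptotics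

lemma nintDist_le_half (x : ℝ) : nintDist x ≤ 1 / 2 := abs_sub_round x

lemma nintDist_intCast_add (k : ℤ) (x : ℝ) : nintDist (k + x) = nintDist x := by
  simp only [nintDist, round_intCast_add, Int.cast_add]
  ring_nf

lemma nintDist_eq_abs {x : ℝ} (h : |x| < 1 / 2) : nintDist x = |x| := by
  obtain ⟨h₁, h₂⟩ := abs_lt.1 h
  simp [nintDist, round_eq_zero_iff.2 ⟨by linarith, h₂⟩]

lemma nintDist_natCast_mul {x : ℝ} (n : ℕ) (h : n * nintDist x < 1 / 2) :
    nintDist (n * x) = n * nintDist x := by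
  have hx : (n : ℝ) * x = ((n * round x : ℤ) : ℝ) + n * (x - round x) := by push_cast; ring
  rw [hx, nintDist_intCast_add, nintDist_eq_abs, abs_mul, Nat.abs_cast]
  · rfl
  · rwa [abs_mul, Nat.abs_cast]

lemma measurable_nintDist : Measurable nintDist := by
  have : Measurable fun x : ℝ => ((round x : ℤ) : ℝ) := by
    simp_rw [round_eq]
    fun_prop
  exact (measurable_id.sub this).abs

lemma nintDist_le_of_forall_pow_mul_lt {P : ℕ} (hP : 0 < P) {ℓ : ℕ} {u : ℝ}
    (h : ∀ i < ℓ, nintDist (P ^ i * u) < (2 * P : ℝ)⁻¹) : nintDist u ≤ (2 * P ^ ℓ : ℝ)⁻¹ := by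
  induction ℓ generalizing u with
  | zero => simpa using nintDist_le_half u
  | succ ℓ ih =>
    have hP' : (0 : ℝ) < P := by exact_mod_cast hP
    have h₀ : nintDist u < (2 * P : ℝ)⁻¹ := by simpa using h 0 ℓ.succ_pos
    have hscale : nintDist (P * u) = P * nintDist u := by
      refine nintDist_natCast_mul P ?_
      calc (P : ℝ) * nintDist u < P * (2 * P : ℝ)⁻¹ := by gcongr
        _ = 1 / 2 := by field_simp
    have hPu : nintDist (P * u) ≤ (2 * P ^ ℓ : ℝ)⁻¹ :=
      ih fun i hi => by simpa [pow_succ, mul_assoc] using h (i + 1) (by omega)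
    rw [hscale] at hPu
    calc nintDist u = P * nintDist u / P := by field_simp
      _ ≤ (2 * P ^ ℓ : ℝ)⁻¹ / P := by gcongr
      _ = (2 * P ^ (ℓ + 1) : ℝ)⁻¹ := by rw [pow_succ]; field_simp

lemma card_Icc_ceil_floor_le {x y : ℝ} (h : x ≤ y + 1) :
    ((Finset.Icc ⌈x⌉ ⌊y⌋).card : ℝ) ≤ y - x + 1 := by
  have hcast : ((⌊y⌋ + 1 - ⌈x⌉).toNat : ℝ) = max ((⌊y⌋ + 1 - ⌈x⌉ : ℤ) : ℝ) 0 := by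
    exact_mod_cast Int.toNat_eq_max _
  rw [Int.card_Icc, hcast]
  push_cast
  exact max_le (by linarith [Int.floor_le y, Int.le_ceil x]) (by linarith)

lemma Icc_inter_nintDist_le_subset {M η c d : ℝ} (hM : 0 < M) :
    Icc c d ∩ {y | nintDist (M * y) ≤ η} ⊆
      ⋃ k ∈ Finset.Icc ⌈M * c - η⌉ ⌊M * d + η⌋,
        Icc ((k - η) / M) ((k - η) / M + 2 * η / M) := by
  rintro y ⟨⟨hcy, hyd⟩, hy⟩
  obtain ⟨h₁, h₂⟩ := abs_le.1 (show |M * y - round (M * y)| ≤ η from hy)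
  have hMc : M * c ≤ M * y := by gcongr
  have hMd : M * y ≤ M * d := by gcongr
  simp only [mem_iUnion, Finset.mem_Icc, exists_prop]
  refine ⟨round (M * y), ⟨Int.ceil_le.2 (by linarith), Int.le_floor.2 (by linarith)⟩, ?_, ?_⟩
  · rw [div_le_iff₀ hM]; linarith
  · rw [← add_div, le_div_iff₀ hM]; linarith

lemma volume_Icc_inter_nintDist_le_inter_le {M η c L b : ℝ} {W : Set ℝ} (hM : 0 < M)
    (hη : 0 ≤ η) (hη' : η ≤ 1 / 2) (hL : 0 ≤ L)
    (hW : ∀ c', volume (Icc c' (c' + 2 * η / M) ∩ W) ≤ ENNReal.ofReal b) :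
    volume (Icc c (c + L) ∩ {y | nintDist (M * y) ≤ η} ∩ W) ≤
      ENNReal.ofReal ((M * L + 2) * b) := by
  set I := Finset.Icc ⌈M * c - η⌉ ⌊M * (c + L) + η⌋
  have hcard : (I.card : ℝ) ≤ M * L + 2 := by
    have hML : 0 ≤ M * L := by positivity
    have := card_Icc_ceil_floor_le (x := M * c - η) (y := M * (c + L) + η) (by linarith)
    linarith
  calc volume (Icc c (c + L) ∩ {y | nintDist (M * y) ≤ η} ∩ W)
      ≤ volume (⋃ k ∈ I, Icc ((k - η) / M) ((k - η) / M + 2 * η / M) ∩ W) := by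
        rw [← iUnion₂_inter]
        exact measure_mono (inter_subset_inter_left W (Icc_inter_nintDist_le_subset hM))
    _ ≤ ∑ k ∈ I, volume (Icc ((k - η) / M) ((k - η) / M + 2 * η / M) ∩ W) :=
        measure_biUnion_finset_le _ _
    _ ≤ ∑ _k ∈ I, ENNReal.ofReal b := Finset.sum_le_sum fun k _ => hW _
    _ = ENNReal.ofReal I.card * ENNReal.ofReal b := by
        rw [Finset.sum_const, nsmul_eq_mul, ENNReal.ofReal_natCast]
    _ ≤ ENNReal.ofReal (M * L + 2) * ENNReal.ofReal b := by gcongr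
    _ = ENNReal.ofReal ((M * L + 2) * b) := (ENNReal.ofReal_mul (by positivity)).symm

lemma volume_Icc_inter_nintDist_le {M η c L : ℝ} (hM : 0 < M) (hη : 0 ≤ η) (hη' : η ≤ 1 / 2)
    (hL : 0 ≤ L) :
    volume (Icc c (c + L) ∩ {y | nintDist (M * y) ≤ η}) ≤
      ENNReal.ofReal ((M * L + 2) * (2 * η / M)) := by
  simpa using volume_Icc_inter_nintDist_le_inter_le (W := univ) hM hη hη' hL fun c' => by simp

def farIndices (P : ℕ) (M y : ℝ) (A : ℕ) : Finset ℕ :=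
  {a ∈ Finset.range A | (2 * P : ℝ)⁻¹ ≤ nintDist (P ^ a * M * y)}

def fewFarSet (P : ℕ) (M : ℝ) (A n : ℕ) : Set ℝ :=
  {y | (farIndices P M y A).card ≤ n}

section farIndices

variable {P : ℕ} {M y : ℝ} {A : ℕ}

lemma nintDist_mul_le_of_forall_farIndices_le (hP : 0 < P) {ℓ : ℕ} (hℓ : ℓ ≤ A)
    (h : ∀ a ∈ farIndices P M y A, ℓ ≤ a) : nintDist (M * y) ≤ (2 * P ^ ℓ : ℝ)⁻¹ := by
  refine nintDist_le_of_forall_pow_mul_lt hP fun i hi => ?_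
  have hnear : i ∉ farIndices P M y A := fun hi' => (h i hi').not_gt hi
  simp only [farIndices, Finset.mem_filter, Finset.mem_range, not_and, not_le] at hnear
  simpa only [mul_assoc] using hnear (by omega)

lemma card_farIndices_shift_lt {ℓ : ℕ} (hℓ : ℓ ∈ farIndices P M y A) :
    (farIndices P (M * P ^ (ℓ + 1)) y (A - ℓ - 1)).card < (farIndices P M y A).card := by
  have hsub : (farIndices P (M * P ^ (ℓ + 1)) y (A - ℓ - 1)).image (· + (ℓ + 1)) ⊆
      farIndices P M y A := by
    simp only [Finset.subset_iff, Finset.mem_image, forall_exists_index, and_imp,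
      forall_apply_eq_imp_iff₂]
    intro a ha
    simp only [farIndices, Finset.mem_filter, Finset.mem_range] at ha ⊢
    refine ⟨by omega, ?_⟩
    simpa only [pow_add, mul_comm, mul_left_comm, mul_assoc] using ha.2
  have hℓ' : ℓ ∉ (farIndices P (M * P ^ (ℓ + 1)) y (A - ℓ - 1)).image (· + (ℓ + 1)) := by
    simp only [Finset.mem_image]
    omega
  rw [← Finset.card_image_of_injective _ (add_left_injective (ℓ + 1))]
  exact Finset.card_lt_card ((Finset.ssubset_iff_of_subset hsub).2 ⟨ℓ, hℓ, hℓ'⟩)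

/-- The witness `ℓ` is the first far index. -/
lemma nintDist_mul_le_or_exists_farIndices_shift (hP : 0 < P) :
    nintDist (M * y) ≤ (2 * P ^ A : ℝ)⁻¹ ∨ ∃ ℓ < A, nintDist (M * y) ≤ (2 * P ^ ℓ : ℝ)⁻¹ ∧
      (farIndices P (M * P ^ (ℓ + 1)) y (A - ℓ - 1)).card < (farIndices P M y A).card := by
  rcases (farIndices P M y A).eq_empty_or_nonempty with hF | hF
  · exact .inl (nintDist_mul_le_of_forall_farIndices_le hP le_rfl (by simp [hF]))
  · have hmin := Finset.min'_mem _ hF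
    have hℓA : _ < A := Finset.mem_range.1 (Finset.mem_filter.1 hmin).1
    exact .inr ⟨_, hℓA, nintDist_mul_le_of_forall_farIndices_le hP hℓA.le
      (fun a ha => Finset.min'_le _ a ha), card_farIndices_shift_lt hmin⟩

lemma fewFarSet_zero_subset (hP : 0 < P) :
    fewFarSet P M A 0 ⊆ {y | nintDist (M * y) ≤ (2 * P ^ A : ℝ)⁻¹} := fun _ hy =>
  (nintDist_mul_le_or_exists_farIndices_shift hP).resolve_right
    fun ⟨_, _, _, hlt⟩ => hlt.not_ge (le_trans hy (Nat.zero_le _))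

lemma inter_fewFarSet_succ_subset (hP : 0 < P) (S : Set ℝ) (n : ℕ) :
    S ∩ fewFarSet P M A (n + 1) ⊆ S ∩ {y | nintDist (M * y) ≤ (2 * P ^ A : ℝ)⁻¹} ∪
      ⋃ ℓ ∈ Finset.range A, S ∩ {y | nintDist (M * y) ≤ (2 * P ^ ℓ : ℝ)⁻¹} ∩
        fewFarSet P (M * P ^ (ℓ + 1)) (A - ℓ - 1) n := by
  rintro y ⟨hyS, hy⟩
  rcases nintDist_mul_le_or_exists_farIndices_shift (y := y) hP with h | ⟨ℓ, hℓA, h, hlt⟩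
  · exact .inl ⟨hyS, h⟩
  · exact .inr (mem_biUnion (Finset.mem_range.2 hℓA)
      ⟨⟨hyS, h⟩, Nat.le_of_lt_succ (hlt.trans_le hy)⟩)

lemma measurableSet_fewFarSet (P : ℕ) (M : ℝ) (A n : ℕ) :
    MeasurableSet (fewFarSet P M A n) := by
  have hcard : Measurable fun y => (farIndices P M y A).card := by
    simp only [farIndices, Finset.card_filter]
    refine Finset.measurable_sum _ fun a _ => Measurable.ite ?_ measurable_const measurable_const
    exact measurableSet_le measurable_const (measurable_nintDist.comp (measurable_const_mul _))
  exact hcard measurableSet_Iic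

end farIndices

lemma volume_Icc_inter_fewFarSet_le {P : ℕ} (hP : 0 < P) (n : ℕ) :
    ∀ (A : ℕ) {M c L : ℝ}, 0 < M → 0 ≤ L →
      volume (Icc c (c + L) ∩ fewFarSet P M A n) ≤
        ENNReal.ofReal ((M * L + 2) * ((P + 2) * A + 1) ^ n / (P ^ A * M)) := by
  have hP' : (0 : ℝ) < P := by exact_mod_cast hP
  have hη : ∀ ℓ : ℕ, (2 * P ^ ℓ : ℝ)⁻¹ ≤ 1 / 2 := fun ℓ => by
    rw [one_div]
    gcongr
    linarith [one_le_pow₀ (n := ℓ) (show (1 : ℝ) ≤ P by exact_mod_cast hP)]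
  induction n with
  | zero =>
    intro A M c L hM hL
    calc volume (Icc c (c + L) ∩ fewFarSet P M A 0)
        ≤ volume (Icc c (c + L) ∩ {y | nintDist (M * y) ≤ (2 * P ^ A : ℝ)⁻¹}) :=
          measure_mono (inter_subset_inter_right _ (fewFarSet_zero_subset hP))
      _ ≤ _ := volume_Icc_inter_nintDist_le hM (by positivity) (hη A) hL
      _ = _ := by congr 1; field_simp
  | succ n ih =>
    intro A M c L hM hL
    set C : ℝ := (P + 2) * A + 1
    have hC : 1 ≤ C := le_add_of_nonneg_left (by positivity)
    -- The piece is covered by intervals of length `1 / (P ^ ℓ * M)`, which the rescaling by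
    -- `M * P ^ (ℓ + 1)` in the inductive hypothesis turns into intervals of length `P`.
    have hpiece : ∀ ℓ < A, volume (Icc c (c + L) ∩
        {y | nintDist (M * y) ≤ (2 * P ^ ℓ : ℝ)⁻¹} ∩
        fewFarSet P (M * P ^ (ℓ + 1)) (A - ℓ - 1) n) ≤
          ENNReal.ofReal ((M * L + 2) * ((P + 2) * C ^ n / (P ^ A * M))) := by
      intro ℓ hℓ
      refine volume_Icc_inter_nintDist_le_inter_le hM (by positivity) (hη ℓ) hL fun c' =>
        (ih (A - ℓ - 1) (by positivity) (by positivity)).trans (ENNReal.ofReal_le_ofReal ?_)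
      have hML : M * P ^ (ℓ + 1) * (2 * (2 * P ^ ℓ : ℝ)⁻¹ / M) = P := by
        field_simp
        ring
      have hPM : (P : ℝ) ^ (A - ℓ - 1) * (M * P ^ (ℓ + 1)) = P ^ A * M := by
        rw [mul_left_comm, ← pow_add, show A - ℓ - 1 + (ℓ + 1) = A by omega, mul_comm]
      have hC' : (P + 2) * ((A - ℓ - 1 : ℕ) : ℝ) + 1 ≤ C := by
        simp only [C]
        gcongr
        exact_mod_cast (Nat.sub_le _ _).trans (Nat.sub_le _ _)
      rw [hML, hPM]
      gcongr
    calc volume (Icc c (c + L) ∩ fewFarSet P M A (n + 1))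
        ≤ volume (Icc c (c + L) ∩ {y | nintDist (M * y) ≤ (2 * P ^ A : ℝ)⁻¹}) +
            ∑ ℓ ∈ Finset.range A, volume (Icc c (c + L) ∩
              {y | nintDist (M * y) ≤ (2 * P ^ ℓ : ℝ)⁻¹} ∩
              fewFarSet P (M * P ^ (ℓ + 1)) (A - ℓ - 1) n) :=
          (measure_mono (inter_fewFarSet_succ_subset hP _ n)).trans <|
            (measure_union_le _ _).trans (add_le_add le_rfl (measure_biUnion_finset_le _ _))
      _ ≤ ENNReal.ofReal ((M * L + 2) * (2 * (2 * P ^ A : ℝ)⁻¹ / M)) +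
            ∑ _ℓ ∈ Finset.range A,
              ENNReal.ofReal ((M * L + 2) * ((P + 2) * C ^ n / (P ^ A * M))) :=
          add_le_add (volume_Icc_inter_nintDist_le hM (by positivity) (hη A) hL)
            (Finset.sum_le_sum fun ℓ hℓ => hpiece ℓ (Finset.mem_range.1 hℓ))
      _ = ENNReal.ofReal ((M * L + 2) / (P ^ A * M) * (1 + A * (P + 2) * C ^ n)) := by
          rw [← ENNReal.ofReal_sum_of_nonneg fun _ _ => by positivity,
            ← ENNReal.ofReal_add (by positivity) (by positivity), Finset.sum_const,
            Finset.card_range, nsmul_eq_mul]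
          congr 1
          field_simp
      _ ≤ ENNReal.ofReal ((M * L + 2) * C ^ (n + 1) / (P ^ A * M)) := by
          rw [mul_div_right_comm]
          gcongr
          have := one_le_pow₀ (n := n) hC
          rw [pow_succ]
          nlinarith

lemma volume_biUnion_Icc_inter_fewFarSet_le {P : ℕ} (hP : 0 < P) {Q : ℝ} (hQ : 1 ≤ Q)
    (A n N : ℕ) :
    volume (⋃ b ∈ Finset.range N, Icc (-(1 / 2) : ℝ) (1 / 2) ∩ fewFarSet P (Q ^ b) A n) ≤
      ENNReal.ofReal (N * (3 * ((P + 2) * A + 1) ^ n) / P ^ A) := by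
  have hrow : ∀ b : ℕ, volume (Icc (-(1 / 2) : ℝ) (1 / 2) ∩ fewFarSet P (Q ^ b) A n) ≤
      ENNReal.ofReal (3 * ((P + 2) * A + 1) ^ n / P ^ A) := fun b => by
    have hQb : 1 ≤ Q ^ b := one_le_pow₀ hQ
    have h := volume_Icc_inter_fewFarSet_le hP n A (M := Q ^ b) (c := -(1 / 2)) (L := 1)
      (by positivity) zero_le_one
    rw [show -(1 / 2) + 1 = (1 / 2 : ℝ) by norm_num] at h
    refine h.trans (ENNReal.ofReal_le_ofReal ?_)
    rw [mul_comm _ (Q ^ b), ← div_div, div_le_div_iff_of_pos_right (by positivity),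
      div_le_iff₀ (by positivity)]
    have : (0 : ℝ) ≤ ((P + 2) * A + 1) ^ n := by positivity
    nlinarith
  calc _ ≤ ∑ b ∈ Finset.range N,
        volume (Icc (-(1 / 2) : ℝ) (1 / 2) ∩ fewFarSet P (Q ^ b) A n) :=
        measure_biUnion_finset_le _ _
    _ ≤ ∑ _b ∈ Finset.range N, ENNReal.ofReal (3 * ((P + 2) * A + 1) ^ n / P ^ A) :=
        Finset.sum_le_sum fun b _ => hrow b
    _ = _ := by
        rw [← ENNReal.ofReal_sum_of_nonneg fun _ _ => by positivity, Finset.sum_const,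
          Finset.card_range, nsmul_eq_mul]
        congr 1
        ring

lemma mul_sq_le_sum_sq_of_le_card_filter {ι : Type*} {s : Finset ι} {f : ι → ℝ} {ε : ℝ}
    (hε : 0 ≤ ε) {k : ℕ} (hk : k ≤ {i ∈ s | ε ≤ f i}.card) : k * ε ^ 2 ≤ ∑ i ∈ s, f i ^ 2 :=
  calc k * ε ^ 2 ≤ {i ∈ s | ε ≤ f i}.card • ε ^ 2 := by
        rw [nsmul_eq_mul]
        gcongr
    _ ≤ ∑ i ∈ s with ε ≤ f i, f i ^ 2 :=
        Finset.card_nsmul_le_sum _ _ _ fun i hi => by gcongr; exact (Finset.mem_filter.1 hi).2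
    _ ≤ ∑ i ∈ s, f i ^ 2 :=
        Finset.sum_le_sum_of_subset_of_nonneg (Finset.filter_subset _ _) fun _ _ _ => sq_nonneg _

lemma multiSr_finite (m : ℕ) (p : Fin m → ℕ) {r : ℝ} (hr : 0 < r) : (multiSr m p r).Finite :=
  (finite_Iic ⌊1 / r⌋₊).subset fun h hh => by
    rw [mem_Iic, Nat.le_floor_iff (by positivity), le_div_iff₀ hr]
    exact hh.2

lemma Nat.Coprime.pow_mul_pow_injective {P Q : ℕ} (hP : 1 < P) (hQ : 1 < Q)
    (hPQ : P.Coprime Q) {a b a' b' : ℕ} (h : P ^ a * Q ^ b = P ^ a' * Q ^ b') :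
    a = a' ∧ b = b' := by
  have key : ∀ {x y x' y' : ℕ}, P ^ x * Q ^ y = P ^ x' * Q ^ y' → x ≤ x' :=
    fun {x y x' y'} h => by
      have hdvd : P ^ x ∣ P ^ x' * Q ^ y' := ⟨Q ^ y, h.symm⟩
      exact (Nat.pow_dvd_pow_iff_le_right hP).1 ((hPQ.pow x y').dvd_of_dvd_mul_right hdvd)
  obtain rfl := le_antisymm (key h) (key h.symm)
  exact ⟨rfl, Nat.pow_right_injective hQ (Nat.eq_of_mul_eq_mul_left (by positivity) h)⟩

lemma sum_sum_le_tsum_multiSr {p : Fin 2 → ℕ} (hp₀ : 1 < p 0) (hp₁ : 1 < p 1)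
    (hcop : (p 0).Coprime (p 1)) {r : ℝ} (hr : 0 < r) {f : ℕ → ℝ} (hf : ∀ h, 0 ≤ f h)
    {A N : ℕ} (hgrid : ∀ a < A, ∀ b < N, (p 0 : ℝ) ^ a * p 1 ^ b * r ≤ 1) :
    ∑ b ∈ Finset.range N, ∑ a ∈ Finset.range A, f (p 0 ^ a * p 1 ^ b) ≤
      ∑' h : multiSr 2 p r, f h := by
  classical
  set grid := (Finset.range N ×ˢ Finset.range A).image fun x => p 0 ^ x.2 * p 1 ^ x.1
  have hinj : Set.InjOn (fun x : ℕ × ℕ => p 0 ^ x.2 * p 1 ^ x.1)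
      ↑(Finset.range N ×ˢ Finset.range A) := fun x _ x' _ h => by
    obtain ⟨h₂, h₁⟩ := hcop.pow_mul_pow_injective hp₀ hp₁ h
    exact Prod.ext h₁ h₂
  have hgrid' : ∀ h ∈ grid, h ∈ multiSr 2 p r := by
    simp only [grid, Finset.mem_image, Finset.mem_product, Finset.mem_range]
    rintro _ ⟨⟨b, a⟩, ⟨hb, ha⟩, rfl⟩
    refine ⟨⟨![a, b], by simp [Fin.prod_univ_two]⟩, ?_⟩
    push_cast
    exact hgrid a ha b hb
  have := (multiSr_finite 2 p hr).to_subtype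
  rw [← Finset.sum_product' (f := fun b a => f (p 0 ^ a * p 1 ^ b)),
    ← Finset.sum_image (f := f) hinj, ← Finset.sum_subtype_of_mem f hgrid']
  exact Summable.sum_le_tsum _ (fun _ _ => hf _) Summable.of_finite

lemma eventually_mul_pow_le_exp {f g : ℝ → ℝ} (hf : f =O[atTop] id) (hg : g =O[atTop] id)
    (n : ℕ) {η : ℝ} (hη : 0 < η) : ∀ᶠ T in atTop, f T * g T ^ n ≤ exp (η * T) := by
  have h : (fun T => f T * g T ^ n) =o[atTop] fun T => exp (η * T) :=
    (hf.mul (hg.pow n)).trans_isLittleO (by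
      simpa only [id, ← pow_succ'] using isLittleO_pow_exp_pos_mul_atTop (n + 1) hη)
  filter_upwards [h.bound one_pos] with T hT
  simpa [abs_of_pos (exp_pos _)] using (le_abs_self _).trans hT

lemma isBigO_natCeil_id {f : ℝ → ℝ} (hf : f =O[atTop] id) :
    (fun T => (⌈f T⌉₊ : ℝ)) =O[atTop] id := by
  refine (isBigO_of_le _ fun T => ?_).trans
    (hf.norm_left.add (isLittleO_const_id_atTop 1).isBigO)
  rw [Real.norm_natCast, Real.norm_of_nonneg (by positivity), Real.norm_eq_abs]
  calc (⌈f T⌉₊ : ℝ) ≤ ⌈|f T|⌉₊ := by exact_mod_cast Nat.ceil_mono (le_abs_self _)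
    _ ≤ |f T| + 1 := (Nat.ceil_lt_add_one (abs_nonneg _)).le

lemma pow_lt_exp_of_lt_natCeil {x s : ℝ} (hx : 1 < x) {a : ℕ} (ha : a < ⌈s / log x⌉₊) :
    x ^ a < exp s := by
  rw [← log_lt_iff_lt_exp (by positivity), log_pow]
  exact (lt_div_iff₀ (log_pos hx)).1 (Nat.lt_ceil.1 ha)

lemma exp_le_pow_natCeil {x : ℝ} (hx : 1 < x) (s : ℝ) : exp s ≤ x ^ ⌈s / log x⌉₊ := by
  rw [← le_log_iff_exp_le (by positivity), log_pow]
  exact (div_le_iff₀ (log_pos hx)).1 (Nat.le_ceil _)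

lemma eventually_exists_exceptional_set {p : Fin 2 → ℕ} (hp₀ : 1 < p 0) (hp₁ : 1 < p 1)
    (hcop : (p 0).Coprime (p 1)) {K δ : ℝ} (hK : 0 < K) (hδ : 0 < δ) :
    ∀ᶠ T in atTop, ∃ E : Set ℝ, MeasurableSet E ∧ E ⊆ Icc (-(1 / 2) : ℝ) (1 / 2) ∧
      volume E ≤ ENNReal.ofReal (exp (-(1 - δ) * T)) ∧
      ∀ y ∈ Icc (-(1 / 2) : ℝ) (1 / 2) \ E,
        K * T ≤ ∑' h : multiSr 2 p (exp (-T)), nintDist (h * y) ^ 2 := by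
  set P := p 0
  set Q := p 1
  have hP : (1 : ℝ) < P := by exact_mod_cast hp₀
  have hQ : (1 : ℝ) < Q := by exact_mod_cast hp₁
  obtain ⟨δ', hδ', hδ'δ, hδ'1⟩ : ∃ δ', 0 < δ' ∧ δ' < δ ∧ δ' < 1 :=
    ⟨min δ 1 / 2, by positivity, (half_lt_self (lt_min hδ one_pos)).trans_le (min_le_left _ _),
      (half_lt_self (lt_min hδ one_pos)).trans_le (min_le_right _ _)⟩
  set ε : ℝ := (2 * P)⁻¹
  have hε : 0 < ε := by positivity
  set n := ⌈K * log Q / (ε ^ 2 * δ')⌉₊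
  set A : ℝ → ℕ := fun T => ⌈(1 - δ') * T / log P⌉₊
  set N : ℝ → ℕ := fun T => ⌈δ' * T / log Q⌉₊
  have hlin : ∀ c d : ℝ, (fun T : ℝ => c * T / d) =O[atTop] id := fun c d =>
    ((isBigO_refl id atTop).const_mul_left (c / d)).congr_left fun T => by simp only [id]; ring
  filter_upwards [eventually_mul_pow_le_exp ((isBigO_natCeil_id (hlin _ _)).const_mul_left 3)
    (((isBigO_natCeil_id (hlin _ _)).const_mul_left (P + 2)).add
      (isLittleO_const_id_atTop 1).isBigO) n (sub_pos.2 hδ'δ), eventually_ge_atTop 0]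
    with T hsmall hT
  refine ⟨⋃ b ∈ Finset.range (N T), Icc (-(1 / 2)) (1 / 2) ∩ fewFarSet P ((Q : ℝ) ^ b) (A T) n,
    ?_, ?_, ?_, ?_⟩
  · exact Finset.measurableSet_biUnion _ fun b _ =>
      measurableSet_Icc.inter (measurableSet_fewFarSet _ _ _ _)
  · exact iUnion₂_subset fun _ _ => inter_subset_left
  · refine (volume_biUnion_Icc_inter_fewFarSet_le (by omega) hQ.le _ _ _).trans
      (ENNReal.ofReal_le_ofReal ?_)
    calc (N T : ℝ) * (3 * ((P + 2) * A T + 1) ^ n) / P ^ A T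
        ≤ exp ((δ - δ') * T) / exp ((1 - δ') * T) := by
          gcongr
          · rw [mul_left_comm, ← mul_assoc]
            exact hsmall
          · exact exp_le_pow_natCeil hP _
      _ = exp (-(1 - δ) * T) := by rw [← exp_sub]; ring_nf
  · rintro y ⟨hy, hyE⟩
    have hrow : ∀ b ∈ Finset.range (N T), ((n + 1 : ℕ) : ℝ) * ε ^ 2 ≤
        ∑ a ∈ Finset.range (A T), nintDist ((P : ℝ) ^ a * (Q : ℝ) ^ b * y) ^ 2 := fun b hb =>
      mul_sq_le_sum_sq_of_le_card_filter (f := fun a => nintDist ((P : ℝ) ^ a * (Q : ℝ) ^ b * y))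
        hε.le <| Nat.succ_le_of_lt <| not_le.1 fun h => hyE (mem_biUnion hb ⟨hy, h⟩)
    have hN : δ' * T / log Q ≤ N T := Nat.le_ceil _
    have hn : K * log Q / (ε ^ 2 * δ') ≤ n + 1 :=
      (Nat.le_ceil _).trans (le_add_of_nonneg_right zero_le_one)
    calc K * T = δ' * T / log Q * (K * log Q / (ε ^ 2 * δ')) * ε ^ 2 := by
          field_simp [(log_pos hQ).ne', hε.ne']
      _ ≤ N T * ((n + 1 : ℕ) * ε ^ 2) := by
          push_cast
          rw [← mul_assoc]
          gcongr
      _ ≤ ∑ b ∈ Finset.range (N T), ∑ a ∈ Finset.range (A T),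
            nintDist ((P : ℝ) ^ a * (Q : ℝ) ^ b * y) ^ 2 := by
          simpa using Finset.card_nsmul_le_sum _ _ _ hrow
      _ = ∑ b ∈ Finset.range (N T), ∑ a ∈ Finset.range (A T),
            nintDist (((P ^ a * Q ^ b : ℕ) : ℝ) * y) ^ 2 := by
          simp only [Nat.cast_mul, Nat.cast_pow]
      _ ≤ _ := by
          refine sum_sum_le_tsum_multiSr (f := fun h : ℕ => nintDist (h * y) ^ 2) hp₀ hp₁ hcop
            (exp_pos _) (fun _ => sq_nonneg _) fun a ha b hb => ?_
          calc (P : ℝ) ^ a * Q ^ b * exp (-T)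
              ≤ exp ((1 - δ') * T) * exp (δ' * T) * exp (-T) := by
                gcongr
                · exact (pow_lt_exp_of_lt_natCeil hP ha).le
                · exact (pow_lt_exp_of_lt_natCeil hQ hb).le
            _ = 1 := by rw [← exp_add, ← exp_add]; ring_nf; exact exp_zero

theorem multiSr_sum_lower_bound_outside_small_set_general (p : Fin 2 → ℕ)
    (hp : ∀ j, 1 < p j)
    (hcop : ∀ i j, i ≠ j → Nat.Coprime (p i) (p j)) :
    ∀ K > (0 : ℝ), ∀ δ > (0 : ℝ), ∃ B > (0 : ℝ), ∃ r₀ > (0 : ℝ),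
      ∀ r : ℝ, 0 < r → r < r₀ →
        ∃ E : Set ℝ, MeasurableSet E ∧ E ⊆ Set.Icc (-(1 / 2) : ℝ) (1 / 2) ∧
          volume E ≤ ENNReal.ofReal (B * r ^ ((1 : ℝ) - δ)) ∧
          ∀ y ∈ Set.Icc (-(1 / 2) : ℝ) (1 / 2) \ E,
            K * Real.log (1 / r) ≤ ∑' h : multiSr 2 p r, nintDist ((h : ℕ) * y) ^ 2 := by
  intro K hK δ hδ
  obtain ⟨T₀, hT₀⟩ := eventually_atTop.1 <|
    eventually_exists_exceptional_set (hp 0) (hp 1) (hcop 0 1 (by decide)) hK hδ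
  refine ⟨1, one_pos, exp (-T₀), exp_pos _, fun r hr hrT₀ => ?_⟩
  have hT : T₀ ≤ log (1 / r) := by
    rw [one_div, log_inv]
    exact le_neg_of_le_neg ((log_lt_iff_lt_exp hr).2 hrT₀).le
  have hexp : exp (-log (1 / r)) = r := by rw [one_div, log_inv, neg_neg, exp_log hr]
  have hrδ : exp (-(1 - δ) * log (1 / r)) = 1 * r ^ (1 - δ) := by
    rw [one_mul, rpow_def_of_pos hr, one_div, log_inv]
    ring_nf
  have := hT₀ _ hT
  rwa [hexp, hrδ] at this

theorem multiSr_sum_lower_bound_outside_small_set (p : Fin 2 → ℕ)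
    (hp : ∀ j, 1 < p j) (hmono : StrictMono p)
    (hcop : ∀ i j, i ≠ j → Nat.Coprime (p i) (p j)) :
    ∀ K > (0 : ℝ), ∀ δ > (0 : ℝ), ∃ B > (0 : ℝ), ∃ r₀ > (0 : ℝ),
      ∀ r : ℝ, 0 < r → r < r₀ →
        ∃ E : Set ℝ, MeasurableSet E ∧ E ⊆ Set.Icc (-(1 / 2) : ℝ) (1 / 2) ∧
          volume E ≤ ENNReal.ofReal (B * r ^ ((1 : ℝ) - δ)) ∧
          ∀ y ∈ Set.Icc (-(1 / 2) : ℝ) (1 / 2) \ E,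
            K * Real.log (1 / r) ≤ ∑' h : multiSr 2 p r, nintDist ((h : ℕ) * y) ^ 2 :=
  multiSr_sum_lower_bound_outside_small_set_general p hp hcop

end
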